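/- Let p be a prime and F ⊆ L number fields such that every infinite place of L lying above a real place of F is real. Fix d ∈ ℕ, an integer d_v for each finite place v of F above p, and an integer d_v⁺ for each real place v of F; for a finite place w of L above p set d_w := d_v with v the place of F below w, and for a real place w of L set d_w⁺ := d_v⁺ with v the real place of F below w. If ∑_{v|p} (d − d_v)·[F_v : ℚ_p] = d·r₂(F) + ∑_{v real} (d − d_v⁺), then ∑_{w|p} (d − d_w)·[L_w : ℚ_p] = d·r₂(L) + ∑_{w real} (d − d_w⁺). -/

import Mathlib

/-!
STATEMENT 3: Let p be a prime and F ⊆ L number fields such that every infinite place of L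
lying above a real place of F is real.  Fix d ∈ ℕ, an integer d_v for each finite place v
of F above p, and an integer d_v⁺ for each real place v of F; for a finite place w of L
above p set d_w := d_v with v the place of F below w, and for a real place w of L set
d_w⁺ := d_v⁺ with v the real place of F below w.  If
∑_{v|p} (d − d_v)·[F_v : ℚ_p] = d·r₂(F) + ∑_{v real} (d − d_v⁺), then
∑_{w|p} (d − d_w)·[L_w : ℚ_p] = d·r₂(L) + ∑_{w real} (d − d_w⁺).
-/

open NumberField

/-- A finite place of a number field `K` above the rational prime `p`: a nonzero prime
ideal of the ring of integers of `K` containing `p`. -/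
def IsFinitePlaceAbove (p : ℕ) (K : Type*) [Field K] [NumberField K]
    (w : Ideal (𝓞 K)) : Prop :=
  w.IsPrime ∧ w ≠ ⊥ ∧ (p : 𝓞 K) ∈ w

/-- The local degree `[K_w : ℚ_p] = e(w|p) · f(w|p)`, the product of the ramification index
and the residue class degree of `w` over `p`. -/
noncomputable def localDegree (p : ℕ) (K : Type*) [Field K] [NumberField K]
    (w : Ideal (𝓞 K)) : ℕ :=
  Ideal.ramificationIdx' (Ideal.span {(p : ℤ)}) w *
    Ideal.inertiaDeg' (Ideal.span {(p : ℤ)}) w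


/-!
For every finite place `v ∣ p` of `F` we have `∑_{w ∣ v} [L_w : ℚ_p] = [L : F] [F_v : ℚ_p]`,
by multiplicativity of `e` and `f` in towers and the fundamental identity `∑_{w ∣ v} e f = [L : F]`.
At infinity, the hypothesis says that `L/F` is unramified, so a place of `L` is real exactly when
the place of `F` below it is, and every infinite place of `F` has exactly `[L : F]` places above it.
Grouping both sides of the identity for `L` by the place of `F` below therefore multiplies both
sides of the identity for `F` by `[L : F]`.
-/

open Module

theorem Fintype.sum_comp_mul_eq_of_sum_fiber {α β R : Type*} [Fintype α] [Fintype β]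
    [DecidableEq β] [CommSemiring R] (g : α → β) (f : β → R) (a : α → R) (b : β → R) (n : R)
    (hfiber : ∀ y, ∑ x : {x // g x = y}, a x = n * b y) :
    ∑ x, f (g x) * a x = n * ∑ y, f y * b y := by
  calc ∑ x, f (g x) * a x = ∑ y, ∑ x : {x // g x = y}, f (g x) * a x :=
        (Fintype.sum_fiberwise g _).symm
    _ = ∑ y, f y * (n * b y) := by
        refine Finset.sum_congr rfl fun y _ => ?_
        rw [← hfiber, Finset.mul_sum]
        exact Finset.sum_congr rfl fun x _ => by rw [x.2]
    _ = n * ∑ y, f y * b y := by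
        rw [Finset.mul_sum]
        exact Finset.sum_congr rfl fun y _ => by ring

namespace Ideal

section Tower

variable {A B C : Type*} [CommRing A] [CommRing B] [CommRing C] [Algebra A B] [Algebra B C]
  [Algebra A C] [IsScalarTower A B C] {P : Ideal A}

variable (B) in
def primesOverUnder (r : P.primesOver C) : P.primesOver B :=
  ⟨r.1.under B, inferInstance, LiesOver.tower_bot r.1 (r.1.under B) P⟩

def primesOverUnderFiberEquiv (q : P.primesOver B) :
    {r : P.primesOver C // primesOverUnder B r = q} ≃ q.1.primesOver C where
  toFun r := ⟨r.1.1, inferInstance, ⟨congrArg Subtype.val r.2.symm⟩⟩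
  invFun s := ⟨⟨s.1, inferInstance, LiesOver.trans s.1 q.1 P⟩, Subtype.ext (over_def s.1 q.1).symm⟩
  left_inv _ := rfl
  right_inv _ := rfl

theorem sum_primesOver_ramificationIdx_mul_inertiaDeg_tower (q : Ideal B) [q.IsPrime]
    [IsDomain B] [Module.Finite B C] [Module.Flat B C] [Fintype (q.primesOver C)] :
    ∑ r : q.primesOver C, r.1.ramificationIdx A * r.1.inertiaDeg A =
      finrank B C * (q.ramificationIdx A * q.inertiaDeg A) := by
  calc ∑ r : q.primesOver C, r.1.ramificationIdx A * r.1.inertiaDeg A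
        = ∑ r : q.primesOver C,
            q.ramificationIdx A * q.inertiaDeg A * (r.1.ramificationIdx B * r.1.inertiaDeg B) :=
        Finset.sum_congr rfl fun r _ => by
          rw [ramificationIdx_tower q r.1, inertiaDeg_tower q r.1]; ring
    _ = finrank B C * (q.ramificationIdx A * q.inertiaDeg A) := by
        rw [← Finset.mul_sum, sum_ramification_inertia_eq_finrank, mul_comm]

end Tower

end Ideal

section FinitePlaces

variable (p : ℕ) [hp : Fact p.Prime]

theorem isFinitePlaceAbove_iff_mem_primesOver (K : Type*) [Field K] [NumberField K]
    (w : Ideal (𝓞 K)) :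
    IsFinitePlaceAbove p K w ↔ w ∈ (Ideal.span {(p : ℤ)}).primesOver (𝓞 K) := by
  have hpZ : Prime (p : ℤ) := Nat.prime_iff_prime_int.mp hp.out
  constructor
  · rintro ⟨hw, -, hpw⟩
    exact ⟨hw, (Ideal.liesOver_span_iff hw.ne_top hpZ).mpr (by simpa using hpw)⟩
  · rintro ⟨hw, hlies⟩
    refine ⟨hw, Ideal.ne_bot_of_mem_primesOver (by simpa using hpZ.ne_zero) ⟨hw, hlies⟩, ?_⟩
    simpa using (Ideal.liesOver_span_iff hw.ne_top hpZ).mp hlies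

theorem localDegree_eq_ramificationIdx_mul_inertiaDeg (K : Type*) [Field K] [NumberField K]
    (w : (Ideal.span {(p : ℤ)}).primesOver (𝓞 K)) :
    localDegree p K w = w.1.ramificationIdx ℤ * w.1.inertiaDeg ℤ := by
  have hspan : Ideal.span {(p : ℤ)} ≠ ⊥ := by simpa using hp.out.ne_zero
  have : w.1.IsMaximal := (Ideal.primesOver.isPrime _ w).isMaximal
    (Ideal.ne_bot_of_mem_primesOver hspan w.2)
  rw [localDegree, Ideal.ramificationIdx'_eq_ramificationIdx _ _ hspan,
    Ideal.inertiaDeg'_eq_inertiaDeg]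

theorem finsum_isFinitePlaceAbove_eq_sum {M : Type*} [AddCommMonoid M] (K : Type*) [Field K]
    [NumberField K] (f : Ideal (𝓞 K) → M) :
    ∑ᶠ w : {w // IsFinitePlaceAbove p K w}, f w.1 =
      ∑ w : (Ideal.span {(p : ℤ)}).primesOver (𝓞 K), f w.1 :=
  (finsum_comp_equiv (f := fun w => f w.1)
    (Equiv.subtypeEquivRight (isFinitePlaceAbove_iff_mem_primesOver p K))).trans
    (finsum_eq_sum_of_fintype _)

variable (F L : Type*) [Field F] [NumberField F] [Field L] [NumberField L] [Algebra F L]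

theorem sum_primesOver_localDegree (v : (Ideal.span {(p : ℤ)}).primesOver (𝓞 F)) :
    ∑ w : {w : (Ideal.span {(p : ℤ)}).primesOver (𝓞 L) // Ideal.primesOverUnder (𝓞 F) w = v},
        localDegree p L w.1 = finrank F L * localDegree p F v := by
  simp_rw [localDegree_eq_ramificationIdx_mul_inertiaDeg p]
  rw [IsFractionRing.finrank_eq (𝓞 F) F (𝓞 L) L,
    ← Ideal.sum_primesOver_ramificationIdx_mul_inertiaDeg_tower]
  exact Fintype.sum_equiv (Ideal.primesOverUnderFiberEquiv v) _ _ fun _ => rfl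

theorem finsum_isFinitePlaceAbove_comap_mul_localDegree (f : Ideal (𝓞 F) → ℤ) :
    ∑ᶠ w : {w : Ideal (𝓞 L) // IsFinitePlaceAbove p L w},
        f (Ideal.comap (algebraMap (𝓞 F) (𝓞 L)) w.1) * localDegree p L w.1 =
      finrank F L * ∑ᶠ v : {v : Ideal (𝓞 F) // IsFinitePlaceAbove p F v},
        f v.1 * localDegree p F v.1 := by
  calc _ = ∑ w : (Ideal.span {(p : ℤ)}).primesOver (𝓞 L),
        f (Ideal.primesOverUnder (𝓞 F) w).1 * localDegree p L w.1 :=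
      finsum_isFinitePlaceAbove_eq_sum p L fun w => f (w.under (𝓞 F)) * localDegree p L w
    _ = finrank F L * ∑ v : (Ideal.span {(p : ℤ)}).primesOver (𝓞 F),
        f v.1 * localDegree p F v.1 :=
      Fintype.sum_comp_mul_eq_of_sum_fiber (Ideal.primesOverUnder (𝓞 F)) (fun v => f v.1)
        (fun w => (localDegree p L w.1 : ℤ)) (fun v => (localDegree p F v.1 : ℤ)) _ fun v => by
        exact_mod_cast sum_primesOver_localDegree p F L v
    _ = _ := by rw [finsum_isFinitePlaceAbove_eq_sum p F (fun v => f v * localDegree p F v)]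

end FinitePlaces

namespace NumberField.InfinitePlace

variable (F L : Type*) [Field F] [Field L] [Algebra F L]

theorem isUnramifiedAtInfinitePlaces_of_isReal_comap
    (h : ∀ w : InfinitePlace L, (w.comap (algebraMap F L)).IsReal → w.IsReal) :
    IsUnramifiedAtInfinitePlaces F L :=
  ⟨fun w => isUnramified_iff.mpr <| (em (w.comap (algebraMap F L)).IsReal).imp (h w)
    not_isReal_iff_isComplex.mp⟩

theorem preimage_comap_setOf_isReal [IsUnramifiedAtInfinitePlaces F L] :
    (fun w : InfinitePlace L => w.comap (algebraMap F L)) ⁻¹' {v | v.IsReal} = {w | w.IsReal} :=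
  Set.ext fun w => ⟨fun h => (isUnramified_iff.mp (isUnramified F w)).resolve_right
    (not_isComplex_iff_isReal.mpr h), IsReal.comap _⟩

variable [NumberField F] [NumberField L]

theorem card_comap_eq_finrank [IsUnramifiedAtInfinitePlaces F L] (v : InfinitePlace F) :
    Nat.card {w : InfinitePlace L // w.comap (algebraMap F L) = v} = finrank F L := by
  have hramified : ramifiedPlacesOver L v = ∅ :=
    Set.eq_empty_of_forall_notMem fun w hw => hw.2 (isUnramified F w)
  have hunramified : unramifiedPlacesOver L v = {w | w.comap (algebraMap F L) = v} :=
    Set.ext fun w => ⟨fun hw => have := hw.1; LiesOver.comap_eq w v,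
      fun hw => ⟨⟨congrArg Subtype.val hw⟩, isUnramified F w⟩⟩
  have := unramifedPlacesOver_ncard_add_eq_finrank L v
  rwa [hramified, hunramified, Set.ncard_empty, mul_zero, add_zero, ← Nat.card_coe_set_eq]
    at this

theorem sum_comap_eq_finrank_mul [IsUnramifiedAtInfinitePlaces F L] (f : InfinitePlace F → ℤ) :
    ∑ w : InfinitePlace L, f (w.comap (algebraMap F L)) = finrank F L * ∑ v, f v := by
  classical
  simpa using Fintype.sum_comp_mul_eq_of_sum_fiber (fun w : InfinitePlace L => w.comap _) f
    1 1 (finrank F L : ℤ) fun v => by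
      simp only [Pi.one_apply, Finset.sum_const, Finset.card_univ, nsmul_eq_mul, mul_one]
      rw [← Nat.card_eq_fintype_card, card_comap_eq_finrank]

theorem mul_nrComplexPlaces_add_finsum_isReal (K : Type*) [Field K] [NumberField K] (d : ℤ)
    (e : InfinitePlace K → ℤ) :
    d * nrComplexPlaces K + ∑ᶠ w : {w : InfinitePlace K // w.IsReal}, (d - e w) =
      ∑ w : InfinitePlace K, (d - {w | w.IsReal}.indicator e w) := by
  classical
  rw [← Fintype.sum_subtype_add_sum_subtype IsReal, finsum_eq_sum_of_fintype, add_comm]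
  congr 1
  · exact Finset.sum_congr rfl fun w _ => by
      rw [Set.indicator_of_mem (show (w : InfinitePlace K) ∈ {w | w.IsReal} from w.2)]
  · have hcard : Fintype.card {w : InfinitePlace K // ¬ w.IsReal} = nrComplexPlaces K :=
      Fintype.card_congr (Equiv.subtypeEquivRight fun w => not_isReal_iff_isComplex)
    rw [Finset.sum_congr rfl fun w _ => by
      rw [Set.indicator_of_notMem (show (w : InfinitePlace K) ∉ {w | w.IsReal} from w.2),
        sub_zero], Finset.sum_const, Finset.card_univ, hcard, nsmul_eq_mul, mul_comm]

end NumberField.InfinitePlace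

theorem data_equality_base_change_of_unramified_at_infinity
    (p : ℕ) (hp : p.Prime)
    (F L : Type*) [Field F] [NumberField F] [Field L] [NumberField L] [Algebra F L]
    (hur : ∀ w : InfinitePlace L, (w.comap (algebraMap F L)).IsReal → w.IsReal)
    (d : ℕ) (dv : Ideal (𝓞 F) → ℤ) (dplus : InfinitePlace F → ℤ)
    (hF : ∑ᶠ v : {v : Ideal (𝓞 F) // IsFinitePlaceAbove p F v},
            (((d : ℤ) - dv v.1) * localDegree p F v.1) =
          (d : ℤ) * InfinitePlace.nrComplexPlaces F +
            ∑ᶠ v : {v : InfinitePlace F // v.IsReal}, ((d : ℤ) - dplus v)) :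
    ∑ᶠ w : {w : Ideal (𝓞 L) // IsFinitePlaceAbove p L w},
        (((d : ℤ) - dv (Ideal.comap (algebraMap (𝓞 F) (𝓞 L)) w.1)) * localDegree p L w.1) =
      (d : ℤ) * InfinitePlace.nrComplexPlaces L +
        ∑ᶠ w : {w : InfinitePlace L // w.IsReal},
          ((d : ℤ) - dplus ((w : InfinitePlace L).comap (algebraMap F L))) := by
  have : Fact p.Prime := ⟨hp⟩
  have := InfinitePlace.isUnramifiedAtInfinitePlaces_of_isReal_comap F L hur
  calc _ = finrank F L *
          ∑ᶠ v : {v // IsFinitePlaceAbove p F v}, (d - dv v.1) * localDegree p F v.1 :=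
        finsum_isFinitePlaceAbove_comap_mul_localDegree p F L fun v => d - dv v
    _ = finrank F L * ∑ v : InfinitePlace F, (d - {v | v.IsReal}.indicator dplus v) := by
        rw [hF, InfinitePlace.mul_nrComplexPlaces_add_finsum_isReal]
    _ = ∑ w : InfinitePlace L, (d - {v | v.IsReal}.indicator dplus (w.comap (algebraMap F L))) :=
        (InfinitePlace.sum_comap_eq_finrank_mul F L _).symm
    _ = _ := by
        refine (Finset.sum_congr rfl fun w _ => ?_).trans
          (InfinitePlace.mul_nrComplexPlaces_add_finsum_isReal L d
            fun w => dplus (w.comap (algebraMap F L))).symm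
        rw [← Set.indicator_comp_right fun w : InfinitePlace L => w.comap (algebraMap F L),
          InfinitePlace.preimage_comap_setOf_isReal]
        rfl
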